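/- Let g be a finite dimensional Lie algebra over a field k, M a finite dimensional g-module, and σ_1, …, σ_r pairwise commuting elements of g such that, for each t, g is spanned by eigenvectors of ad σ_t with eigenvalues in k. If F is an n-cocycle of g with coefficients in M (with n ≥ r) which is homogeneous of degree 0 with respect to each σ_t, then the iterated contraction ι_{σ_r} ι_{σ_{r−1}} ⋯ ι_{σ_1} F is an (n−r)-cocycle. -/

import Mathlib

variable {k L M : Type*}

section

variable [CommRing k] [LieRing L] [LieAlgebra k L]
  [AddCommGroup M] [Module k M] [LieRingModule L M] [LieModule k L M]

/-- The Chevalley–Eilenberg coboundary of an `n`-cochain (given as a function on `n`-tuples):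
`(δF)(a₀,…,aₙ) = ∑ᵢ (−1)ⁱ ⁅aᵢ, F(…,âᵢ,…)⁆
  + ∑_{i<j} (−1)^{i+j} F(⁅aᵢ,aⱼ⁆, a₀,…,âᵢ,…,âⱼ,…,aₙ)`.
In the second sum, the pair `i < j` is encoded as `(i, i.succAbove j)` with `(i : ℕ) ≤ (j : ℕ)`,
so that the actual second index is `j + 1` and the sign is `(−1)^{i+j+1}`. -/
def ceCoboundary : ∀ {n : ℕ}, ((Fin n → L) → M) → (Fin (n + 1) → L) → M
  | 0, F => fun a => ⁅a 0, F Fin.elim0⁆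
  | m + 1, F => fun a =>
      (∑ i : Fin (m + 2), ((-1 : ℤ) ^ (i : ℕ)) • ⁅a i, F (a ∘ i.succAbove)⁆) +
      ∑ i : Fin (m + 2), ∑ j : Fin (m + 1),
        if (i : ℕ) ≤ (j : ℕ) then
          ((-1 : ℤ) ^ ((i : ℕ) + (j : ℕ) + 1)) •
            F (Fin.cons ⁅a i, a (i.succAbove j)⁆ ((a ∘ i.succAbove) ∘ j.succAbove))
        else 0

/-- Contraction `ι_σ F` of a cochain `F` with an element `σ` in the first slot. -/
def ceContract {n : ℕ} (σ : L) (F : (Fin (n + 1) → L) → M) : (Fin n → L) → M :=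
  fun v => F (Fin.cons σ v)

/-- An `n`-cochain `F` is homogeneous of degree `r` with respect to `σ` if whenever
`⁅σ, aᵢ⁆ = λᵢ • aᵢ` for all `i`, one has `⁅σ, F(a₁,…,aₙ)⁆ = (λ₁ + ⋯ + λₙ + r) • F(a₁,…,aₙ)`. -/
def IsHomogeneousOfDegree (σ : L) (r : k) {n : ℕ} (F : (Fin n → L) → M) : Prop :=
  ∀ (a : Fin n → L) (lam : Fin n → k),
    (∀ i, ⁅σ, a i⁆ = lam i • a i) → ⁅σ, F a⁆ = ((∑ i, lam i) + r) • F a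

end

section

variable [CommRing k] [LieRing L] [LieAlgebra k L]
  [AddCommGroup M] [Module k M] [LieRingModule L M] [LieModule k L M]

/-- Iterated contraction `ι_{σ_r} ι_{σ_{r−1}} ⋯ ι_{σ_1} F`, which sends an `(n+r)`-cochain
`F` to the `n`-cochain `(a₁,…,aₙ) ↦ F(σ₁,…,σ_r,a₁,…,aₙ)`. -/
def ceContractIter : ∀ {r : ℕ}, (Fin r → L) → ∀ {n : ℕ}, ((Fin (n + r) → L) → M) →
    (Fin n → L) → M
  | 0, _, _, F => F
  | _ + 1, σ, _, F => ceContractIter (σ ∘ Fin.succ) (ceContract (σ 0) F)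

end

/-!
Cartan's formula `δ ι_σ + ι_σ δ = L_σ`, with `L_σ F (a) = σ · F(a) - ∑ᵢ F(…, [σ, aᵢ], …)`,
reduces the claim for a single contraction to `L_σ F = 0`. Now `L_σ F` is multilinear, and on a
tuple of eigenvectors of `ad σ` homogeneity of degree `0` says exactly that it vanishes; since these
eigenvectors span `g`, `L_σ F = 0`. Contracting with an element that commutes with `τ` preserves
homogeneity with respect to `τ`, so the contractions by `σ₁, …, σ_r` can be performed one at a time.
-/

open Function

namespace AlternatingMap

variable {R M N : Type*} [CommRing R] [AddCommGroup M] [Module R M] [AddCommGroup N] [Module R N]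
  {n : ℕ}

theorem map_cons_comp_succAbove (f : M [⋀^Fin (n + 1)]→ₗ[R] N) (x : M) (v : Fin (n + 1) → M)
    (j : Fin (n + 1)) :
    f (Fin.cons x (v ∘ j.succAbove)) = (-1 : ℤ) ^ (j : ℕ) • f (update v j x) := by
  rw [← Fin.insertNth_removeNth]
  exact (neg_one_pow_smul_map_insertNth f j x _).symm

theorem map_cons_cons_swap (f : M [⋀^Fin (n + 2)]→ₗ[R] N) (x y : M) (v : Fin n → M) :
    f (Fin.cons x (Fin.cons y v)) = -f (Fin.cons y (Fin.cons x v)) := by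
  have := f.map_insertNth 1 x (Fin.cons y v)
  rw [← Fin.succ_zero_eq_one, Fin.insertNth_succ_cons, Fin.insertNth_zero'] at this
  simp [this, Matrix.vecCons]

end AlternatingMap

theorem MultilinearMap.eq_zero_of_span_eq_top {R M N : Type*} [CommRing R] [AddCommGroup M]
    [Module R M] [AddCommGroup N] [Module R N] {E : Set M} (hE : Submodule.span R E = ⊤) :
    ∀ {n : ℕ} (f : MultilinearMap R (fun _ : Fin n => M) N),
      (∀ v : Fin n → M, (∀ i, v i ∈ E) → f v = 0) → f = 0
  | 0, f, hf => by ext v; exact hf v finZeroElim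
  | n + 1, f, hf => by
    suffices ∀ x ∈ Submodule.span R E, ∀ w, f (Fin.cons x w) = 0 by
      ext v
      rw [← Fin.cons_self_tail v]
      exact this _ (hE ▸ Submodule.mem_top) _
    intro x hx
    induction hx using Submodule.span_induction with
    | mem x hx =>
      have := eq_zero_of_span_eq_top hE (f.curryLeft x) fun w hw ↦
        hf _ (Fin.cases hx hw)
      exact fun w ↦ DFunLike.congr_fun this w
    | zero => exact fun w ↦ f.map_coord_zero 0 (by simp)
    | add x y _ _ hx hy => intro w; rw [f.cons_add, hx, hy, add_zero]
    | smul c x _ hx => intro w; rw [f.cons_smul, hx, smul_zero]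

section Bracket

variable [LieRing L] [AddCommGroup M]

def ceBracketTerm {m : ℕ} (F : (Fin (m + 1) → L) → M) (a : Fin (m + 2) → L) (i : Fin (m + 2))
    (j : Fin (m + 1)) : M :=
  if (i : ℕ) ≤ (j : ℕ) then
    ((-1 : ℤ) ^ ((i : ℕ) + (j : ℕ) + 1)) •
      F (Fin.cons ⁅a i, a (i.succAbove j)⁆ ((a ∘ i.succAbove) ∘ j.succAbove))
  else 0

def ceBracketSum : ∀ {n : ℕ}, ((Fin n → L) → M) → (Fin (n + 1) → L) → M
  | 0, _ => 0
  | _ + 1, F => fun a => ∑ i, ∑ j, ceBracketTerm F a i j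

theorem ceBracketTerm_cons_succ_zero {m : ℕ} (σ : L) (F : (Fin (m + 1) → L) → M)
    (a : Fin (m + 1) → L) (p : Fin (m + 1)) :
    ceBracketTerm F (Fin.cons σ a) p.succ 0 = 0 := by
  simp [ceBracketTerm]

variable [CommRing k] [Module k L] [Module k M]

theorem ceBracketTerm_cons_zero {m : ℕ} (σ : L) (F : L [⋀^Fin (m + 1)]→ₗ[k] M)
    (a : Fin (m + 1) → L) (j : Fin (m + 1)) :
    ceBracketTerm F (Fin.cons σ a) 0 j = -F (update a j ⁅σ, a j⁆) := by
  simp only [ceBracketTerm, Fin.val_zero, zero_le, if_true, Fin.cons_zero, Fin.succAbove_zero,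
    Fin.cons_succ, Fin.cons_comp_succ]
  rw [F.map_cons_comp_succAbove, smul_smul, ← pow_add, Odd.neg_one_pow ⟨j, by ring⟩, neg_one_zsmul]

theorem ceBracketTerm_cons_succ_succ {m : ℕ} (σ : L) (F : L [⋀^Fin (m + 2)]→ₗ[k] M)
    (a : Fin (m + 2) → L) (p : Fin (m + 2)) (q : Fin (m + 1)) :
    ceBracketTerm F (Fin.cons σ a) p.succ q.succ = -ceBracketTerm (ceContract σ F) a p q := by
  simp only [ceBracketTerm, Fin.val_succ, add_le_add_iff_right]
  split_ifs
  · rw [Fin.cons_comp_succ_succAbove, Fin.cons_comp_succ_succAbove, F.map_cons_cons_swap,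
      Fin.cons_succ, Fin.succ_succAbove_succ, Fin.cons_succ, smul_neg, ceContract,
      show (p : ℕ) + 1 + (q + 1) + 1 = p + q + 1 + 2 by ring, pow_add, neg_one_sq, mul_one]
    rfl
  · rw [neg_zero]

theorem ceBracketSum_cons {n : ℕ} (σ : L) (F : L [⋀^Fin (n + 1)]→ₗ[k] M) (a : Fin (n + 1) → L) :
    ceBracketSum F (Fin.cons σ a) =
      -(∑ j, F (update a j ⁅σ, a j⁆)) - ceBracketSum (ceContract σ F) a := by
  have row_zero : ∑ j, ceBracketTerm F (Fin.cons σ a) 0 j = -∑ j, F (update a j ⁅σ, a j⁆) := by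
    simp only [ceBracketTerm_cons_zero, Finset.sum_neg_distrib]
  have rows_succ : ∑ p : Fin (n + 1), ∑ j, ceBracketTerm F (Fin.cons σ a) p.succ j =
      -ceBracketSum (ceContract σ F) a := by
    cases n with
    | zero => simp [ceBracketSum, ceBracketTerm_cons_succ_zero]
    | succ m =>
      rw [ceBracketSum, ← Finset.sum_neg_distrib]
      refine Finset.sum_congr rfl fun p _ ↦ ?_
      rw [Fin.sum_univ_succ, ceBracketTerm_cons_succ_zero, zero_add, ← Finset.sum_neg_distrib]
      simp only [ceBracketTerm_cons_succ_succ]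
  change ∑ i, ∑ j, ceBracketTerm F (Fin.cons σ a) i j = _
  rw [Fin.sum_univ_succ, row_zero, rows_succ, sub_eq_add_neg]

end Bracket

section Cartan

variable [LieRing L] [AddCommGroup M] [LieRingModule L M]

def ceActionSum {n : ℕ} (F : (Fin n → L) → M) (a : Fin (n + 1) → L) : M :=
  ∑ i : Fin (n + 1), ((-1 : ℤ) ^ (i : ℕ)) • ⁅a i, F (a ∘ i.succAbove)⁆

theorem ceCoboundary_eq_add {n : ℕ} (F : (Fin n → L) → M) :
    ceCoboundary F = ceActionSum F + ceBracketSum F := by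
  cases n with
  | zero =>
    ext a
    simp [ceCoboundary, ceActionSum, ceBracketSum, Subsingleton.elim (a ∘ _) Fin.elim0]
  | succ m => rfl

theorem ceActionSum_cons {n : ℕ} (σ : L) (F : (Fin (n + 1) → L) → M) (a : Fin (n + 1) → L) :
    ceActionSum F (Fin.cons σ a) = ⁅σ, F a⁆ - ceActionSum (ceContract σ F) a := by
  rw [ceActionSum, Fin.sum_univ_succ]
  simp only [Fin.cons_zero, Fin.succAbove_zero, Fin.cons_comp_succ, Fin.val_zero, pow_zero,
    one_smul, Fin.cons_succ, Fin.cons_comp_succ_succAbove, Fin.val_succ, pow_succ, mul_neg_one,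
    neg_smul, Finset.sum_neg_distrib, ← sub_eq_add_neg]
  rfl

def ceLieDeriv (σ : L) {n : ℕ} (F : (Fin n → L) → M) (a : Fin n → L) : M :=
  ⁅σ, F a⁆ - ∑ i, F (update a i ⁅σ, a i⁆)

theorem ceCoboundary_ceContract_add_ceContract_ceCoboundary [CommRing k] [Module k L]
    [Module k M] {n : ℕ} (σ : L) (F : L [⋀^Fin (n + 1)]→ₗ[k] M) :
    ceCoboundary (ceContract σ F) + ceContract σ (ceCoboundary F) = ceLieDeriv σ F := by
  ext a
  rw [Pi.add_apply, ceContract, ceCoboundary_eq_add, ceCoboundary_eq_add, Pi.add_apply,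
    Pi.add_apply, ceActionSum_cons, ceBracketSum_cons, ceLieDeriv]
  abel

variable [CommRing k] [LieAlgebra k L] [Module k M] [LieModule k L M]

theorem ceLieDeriv_eq_zero {σ : L} (hσ : Submodule.span k {y : L | ∃ c : k, ⁅σ, y⁆ = c • y} = ⊤)
    {n : ℕ} (F : MultilinearMap k (fun _ : Fin n ↦ L) M) (hF : IsHomogeneousOfDegree σ (0 : k) F) :
    ceLieDeriv σ F = 0 := by
  classical
  set Φ : MultilinearMap k (fun _ : Fin n ↦ L) M :=
    (LieModule.toEnd k L M σ).compMultilinearMap F -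
      ∑ i, F.compLinearMap (update (fun _ ↦ LinearMap.id) i (LieAlgebra.ad k L σ))
  have hΦ : ∀ a, Φ a = ceLieDeriv σ F a := by
    intro a
    have hupd : ∀ i, (fun j ↦ update (fun _ ↦ LinearMap.id) i (LieAlgebra.ad k L σ) j (a j)) =
        update a i ⁅σ, a i⁆ := fun i ↦ funext fun j ↦ by
      rw [apply_update (fun j (φ : L →ₗ[k] L) ↦ φ (a j))]
      rfl
    simp only [Φ, ceLieDeriv, sub_apply, sum_apply, MultilinearMap.compLinearMap_apply, hupd]
    rfl
  have hΦ_zero : Φ = 0 := by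
    refine MultilinearMap.eq_zero_of_span_eq_top hσ Φ fun a ha ↦ ?_
    choose c hc using ha
    rw [hΦ, ceLieDeriv, hF a c hc, add_zero, Finset.sum_smul, sub_eq_zero]
    refine Finset.sum_congr rfl fun i _ ↦ ?_
    rw [hc, F.map_update_smul, update_eq_self]
  ext a
  rw [← hΦ, hΦ_zero]
  rfl

end Cartan

section Contraction

variable [CommRing k] [LieRing L] [LieAlgebra k L] [AddCommGroup M] [Module k M]
  [LieRingModule L M]

theorem IsHomogeneousOfDegree.ceContract {τ σ : L} {c r : k} (hσ : ⁅τ, σ⁆ = c • σ) {n : ℕ}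
    {F : (Fin (n + 1) → L) → M} (hF : IsHomogeneousOfDegree τ r F) :
    IsHomogeneousOfDegree τ (c + r) (ceContract σ F) := by
  intro a lam hlam
  have := hF (Fin.cons σ a) (Fin.cons c lam) (Fin.cases hσ hlam)
  change ⁅τ, F (Fin.cons σ a)⁆ = _ • F (Fin.cons σ a)
  rw [this, Fin.sum_cons, add_comm c, add_assoc]

theorem ceCoboundary_ceContract_eq_zero [LieModule k L M] {σ : L}
    (hσ : Submodule.span k {y : L | ∃ c : k, ⁅σ, y⁆ = c • y} = ⊤) {n : ℕ}
    (F : L [⋀^Fin (n + 1)]→ₗ[k] M) (hF : IsHomogeneousOfDegree σ (0 : k) F)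
    (hδF : ceCoboundary F = 0) :
    ceCoboundary (ceContract σ F) = 0 :=
  calc ceCoboundary (ceContract σ F)
      = ceCoboundary (ceContract σ F) + ceContract σ (ceCoboundary F) := by
        rw [hδF]; exact (add_zero _).symm
    _ = ceLieDeriv σ F := ceCoboundary_ceContract_add_ceContract_ceCoboundary σ F
    _ = 0 := ceLieDeriv_eq_zero hσ F.toMultilinearMap hF

end Contraction

theorem stmt7_general [Field k] [LieRing L] [LieAlgebra k L]
    [AddCommGroup M] [Module k M] [LieRingModule L M] [LieModule k L M]
    {r : ℕ} (σ : Fin r → L)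
    (hcomm : ∀ s t, ⁅σ s, σ t⁆ = 0)
    (hL : ∀ t, Submodule.span k {y : L | ∃ c : k, ⁅σ t, y⁆ = c • y} = ⊤)
    {n : ℕ} (F : AlternatingMap k L M (Fin (n + r)))
    (hF : ∀ t, IsHomogeneousOfDegree (σ t) (0 : k) ⇑F)
    (hcocycle : ceCoboundary ⇑F = 0) :
    ceCoboundary (ceContractIter σ ⇑F) = 0 := by
  induction r generalizing n with
  | zero => exact hcocycle
  | succ r ih =>
    have hF_contract (t : Fin r) : IsHomogeneousOfDegree (σ t.succ) (0 : k) (ceContract (σ 0) F) := by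
      simpa using (hF t.succ).ceContract (c := 0) (by rw [hcomm, zero_smul])
    exact ih (σ ∘ Fin.succ) (fun s t ↦ hcomm _ _) (fun t ↦ hL _) (F.curryLeft (σ 0)) hF_contract
      (ceCoboundary_ceContract_eq_zero (hL 0) F (hF 0) hcocycle)

/-- Corollary 2: if `σ₁, …, σ_r` are commuting ad-semisimple elements and `F` is an
`(n+r)`-cocycle homogeneous of degree `0` with respect to each `σ_t`, then the iterated
contraction `ι_{σ_r} ⋯ ι_{σ_1} F` is an `n`-cocycle. -/
theorem stmt7 [Field k] [LieRing L] [LieAlgebra k L]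
    [AddCommGroup M] [Module k M] [LieRingModule L M] [LieModule k L M]
    [FiniteDimensional k L] [FiniteDimensional k M]
    {r : ℕ} (σ : Fin r → L)
    (hcomm : ∀ s t, ⁅σ s, σ t⁆ = 0)
    (hL : ∀ t, Submodule.span k {y : L | ∃ c : k, ⁅σ t, y⁆ = c • y} = ⊤)
    {n : ℕ} (F : AlternatingMap k L M (Fin (n + r)))
    (hF : ∀ t, IsHomogeneousOfDegree (σ t) (0 : k) ⇑F)
    (hcocycle : ceCoboundary ⇑F = 0) :
    ceCoboundary (ceContractIter σ ⇑F) = 0 :=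
  stmt7_general σ hcomm hL F hF hcocycle
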